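/- arXiv:1311.6189 — 6 statements merged into one kernel-verified Lean document; each statement's English description precedes it below -/
import Mathlib

section
/- Let G be a group, n a natural number, and M a maximal proper subgroup of the direct power Gⁿ. If U ⊆ Fin n is a support of M (i.e., the projection π_U(M) is a proper subgroup of G^U), then π_U(M) is a maximal proper subgroup of G^U and M = π_U(M) × G^(Fin n \ U), i.e., M is the full preimage of π_U(M) under the projection π_U : Gⁿ → G^U. -/
/-- The projection homomorphism `Gⁿ → G^U` for `U ⊆ Fin n`. -/
def projHom (G : Type*) [Group G] {n : ℕ} (U : Set (Fin n)) :
    ((Fin n → G)) →* (U → G) where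
  toFun f := fun u => f u.val
  map_one' := rfl
  map_mul' _ _ := rfl

/-!
Since `π_U` is surjective, `map π_U` and `comap π_U` form a Galois insertion. For a Galois
insertion `l ⊣ u` and a coatom `a` with `l a ≠ ⊤`, the element `u (l a) ≥ a` is not `⊤` (its
image under `l` is `l a`), so it equals `a`; and `u` embeds `β` into `α` preserving `⊤`, so the
preimage of the coatom `u (l a) = a` is a coatom.
-/

namespace GaloisInsertion

variable {α β : Type*} [PartialOrder α] [PartialOrder β] [OrderTop α] [OrderTop β]
  {l : α → β} {u : β → α}

theorem u_l_eq_of_isCoatom (gi : GaloisInsertion l u) {a : α} (ha : IsCoatom a)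
    (hla : l a ≠ ⊤) : u (l a) = a := by
  have hula : u (l a) ≠ ⊤ := fun h => hla (by rw [← gi.l_u_eq (l a), h, gi.l_top])
  exact (ha.le_iff.mp (gi.gc.le_u_l a)).resolve_left hula

theorem isCoatom_l_of_isCoatom (gi : GaloisInsertion l u) {a : α} (ha : IsCoatom a)
    (hla : l a ≠ ⊤) : IsCoatom (l a) :=
  gi.isCoatom_of_image (by rwa [gi.u_l_eq_of_isCoatom ha hla])

end GaloisInsertion

def Subgroup.giMapComap {G N : Type*} [Group G] [Group N] {f : G →* N}
    (hf : Function.Surjective f) : GaloisInsertion (Subgroup.map f) (Subgroup.comap f) :=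
  (Subgroup.gc_map_comap f).toGaloisInsertion fun K =>
    (Subgroup.map_comap_eq_self_of_surjective hf K).ge

theorem projHom_surjective (G : Type*) [Group G] {n : ℕ} (U : Set (Fin n)) :
    Function.Surjective (projHom G U) :=
  Subtype.surjective_restrict (· ∈ U)

theorem stmt2 {G : Type*} [Group G] {n : ℕ} (M : Subgroup (Fin n → G))
    (hM : IsCoatom M) (U : Set (Fin n)) (hU : M.map (projHom G U) ≠ ⊤) :
    IsCoatom (M.map (projHom G U)) ∧
      M = (M.map (projHom G U)).comap (projHom G U) := by
  have gi := Subgroup.giMapComap (projHom_surjective G U)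
  exact ⟨gi.isCoatom_l_of_isCoatom hM hU, (gi.u_l_eq_of_isCoatom hM hU).symm⟩
end

section
/- Let G be a finite group with |G| ≥ 2 and n ≥ 1. If S is a subset of Gⁿ = (Fin n → G) that generates Gⁿ as a group, then n ≤ |G|^|S|. Consequently, every generating set of Gⁿ has size at least log n / log |G|. -/
theorem stmt3 {G : Type*} [Group G] [Fintype G] (hG : 2 ≤ Fintype.card G)
    {n : ℕ} (hn : 1 ≤ n) (S : Finset (Fin n → G))
    (hS : Subgroup.closure (S : Set (Fin n → G)) = ⊤) :
    n ≤ Fintype.card G ^ S.card ∧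
      Real.log n / Real.log (Fintype.card G) ≤ S.card := by
  classical
  have key : n ≤ Fintype.card G ^ S.card := by
    have hinj : Function.Injective (fun i : Fin n => fun s : S => (s : Fin n → G) i) := by
      intro i j hij
      -- eval i and eval j agree on S, hence on closure S = ⊤
      have hloc : Subgroup.closure (S : Set (Fin n → G)) ≤
          (Pi.evalMonoidHom (fun _ : Fin n => G) i).eqLocus
            (Pi.evalMonoidHom (fun _ : Fin n => G) j) := by
        apply Subgroup.closure_le _ |>.2
        intro x hx
        exact congrFun hij ⟨x, hx⟩
      rw [hS, top_le_iff] at hloc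
      -- so every x satisfies x i = x j
      have hall : ∀ x : Fin n → G, x i = x j := by
        intro x
        have : x ∈ (Pi.evalMonoidHom (fun _ : Fin n => G) i).eqLocus
            (Pi.evalMonoidHom (fun _ : Fin n => G) j) := by rw [hloc]; trivial
        exact this
      by_contra hne
      obtain ⟨a, b, hab⟩ := Fintype.exists_pair_of_one_lt_card hG
      have := hall (Function.update (fun _ => b) i a)
      rw [Function.update_self, Function.update_of_ne (Ne.symm hne)] at this
      exact hab this
    calc n = Fintype.card (Fin n) := (Fintype.card_fin n).symm
      _ ≤ Fintype.card (S → G) := Fintype.card_le_of_injective _ hinj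
      _ = Fintype.card G ^ S.card := by
          rw [Fintype.card_fun, Fintype.card_coe]
  refine ⟨key, ?_⟩
  have hlogG : 0 < Real.log (Fintype.card G) := by
    apply Real.log_pos
    exact_mod_cast hG
  rw [div_le_iff₀ hlogG]
  have : Real.log n ≤ Real.log ((Fintype.card G : ℝ) ^ S.card) := by
    apply Real.log_le_log (by exact_mod_cast hn)
    exact_mod_cast key
  rw [Real.log_pow] at this
  linarith [this]
end

section
/- Let B be a finite set with |B| = b ≥ 2 and let n ≥ k ≥ 2 and g ≥ 1 be natural numbers. If C(n, k) · b^k · (b^k − 1)^g · b^{g(n−k)} < b^{gn}, then there exists a g × n matrix M over B such that for every k-element subset σ of columns, the rows of the σ-minor of M exhaust all of B^k (equivalently: for every σ ⊆ Fin n with |σ| = k and every v : σ → B, some row of M restricts to v on σ). -/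
theorem stmt8 {B : Type*} [Fintype B] (b : ℕ) (hb : Fintype.card B = b)
    (hb2 : 2 ≤ b) (g n k : ℕ) (hg : 1 ≤ g) (hk : 2 ≤ k) (hkn : k ≤ n)
    (h : n.choose k * b ^ k * (b ^ k - 1) ^ g * b ^ (g * (n - k)) < b ^ (g * n)) :
    ∃ M : Fin g → Fin n → B, ∀ σ : Finset (Fin n), σ.card = k →
      ∀ v : {x // x ∈ σ} → B, ∃ i : Fin g, ∀ x : {x // x ∈ σ}, M i x.val = v x := by
  classical
  by_contra hcon
  push_neg at hcon
  -- the bad sets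
  set s : Finset (Finset (Fin n)) := Finset.powersetCard k Finset.univ with hsdef
  set Bad : (σ : Finset (Fin n)) → ({x // x ∈ σ} → B) → Finset (Fin g → Fin n → B) :=
    fun σ v => Finset.univ.filter
      (fun M : Fin g → Fin n → B => ∀ i, ¬ ∀ x : {x // x ∈ σ}, M i x.val = v x) with hBad
  have hcover : (Finset.univ : Finset (Fin g → Fin n → B)) ⊆
      s.biUnion (fun σ => Finset.univ.biUnion (fun v : {x // x ∈ σ} → B => Bad σ v)) := by
    intro M _
    obtain ⟨σ, hσ, v, hv⟩ := hcon M
    simp only [Finset.mem_biUnion, Finset.mem_filter, Finset.mem_univ, true_and, hsdef,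
      Finset.mem_powersetCard, hBad]
    refine ⟨σ, ⟨Finset.subset_univ _, hσ⟩, v, fun i => ?_⟩
    intro hall
    obtain ⟨x, hx⟩ := hv i
    exact hx (hall x)
  -- cardinality of each bad set
  have hBadcard : ∀ (σ : Finset (Fin n)), σ.card = k → ∀ v : {x // x ∈ σ} → B,
      (Bad σ v).card = (b ^ k - 1) ^ g * b ^ (g * (n - k)) := by
    intro σ hσ v
    have hpi : Bad σ v = Fintype.piFinset (fun _ : Fin g =>
        Finset.univ.filter (fun r : Fin n → B => ¬ ∀ x : {x // x ∈ σ}, r x.val = v x)) := by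
      ext M
      simp [hBad, Fintype.mem_piFinset]
    -- count good rows
    have hgood : (Finset.univ.filter
        (fun r : Fin n → B => ∀ x : {x // x ∈ σ}, r x.val = v x)).card = b ^ (n - k) := by
      have hpi2 : Finset.univ.filter
          (fun r : Fin n → B => ∀ x : {x // x ∈ σ}, r x.val = v x) =
          Fintype.piFinset (fun x : Fin n =>
            if h : x ∈ σ then ({v ⟨x, h⟩} : Finset B) else Finset.univ) := by
        ext r
        simp only [Finset.mem_filter, Finset.mem_univ, true_and, Fintype.mem_piFinset]
        constructor
        · intro hr x
          by_cases hx : x ∈ σ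
          · simp [hx, hr ⟨x, hx⟩]
          · simp [hx]
        · intro hr x
          have := hr x.val
          simpa [x.prop] using this
      rw [hpi2, Fintype.card_piFinset]
      have : ∀ x : Fin n, (if h : x ∈ σ then ({v ⟨x, h⟩} : Finset B) else Finset.univ).card
          = if x ∈ σ then 1 else b := by
        intro x; split_ifs with hx <;> simp [hx, hb]
      rw [Finset.prod_congr rfl (fun x _ => this x), Finset.prod_ite, Finset.prod_const,
        Finset.prod_const, one_pow, one_mul]
      congr 1
      have : Finset.univ.filter (fun x : Fin n => ¬ x ∈ σ) = σᶜ := by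
        ext x; simp
      rw [this, Finset.card_compl, hσ, Fintype.card_fin]
    have hbadrow : (Finset.univ.filter
        (fun r : Fin n → B => ¬ ∀ x : {x // x ∈ σ}, r x.val = v x)).card
        = (b ^ k - 1) * b ^ (n - k) := by
      have hsplit := Finset.card_filter_add_card_filter_not (s := Finset.univ)
        (p := fun r : Fin n → B => ∀ x : {x // x ∈ σ}, r x.val = v x)
      have htot : (Finset.univ : Finset (Fin n → B)).card = b ^ n := by
        simp [Finset.card_univ, hb]
      have hbn : b ^ n = b ^ k * b ^ (n - k) := by
        rw [← pow_add, Nat.add_sub_cancel' hkn]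
      have hmul : (b ^ k - 1) * b ^ (n - k) = b ^ n - b ^ (n - k) := by
        rw [Nat.sub_mul, one_mul, ← hbn]
      rw [hmul, ← hgood, ← htot, ← hsplit, Nat.add_sub_cancel_left]
    rw [hpi, Fintype.card_piFinset, Finset.prod_const, Finset.card_univ, Fintype.card_fin,
      hbadrow, mul_pow, ← pow_mul, Nat.mul_comm (n - k) g]
  have hle : (Finset.univ : Finset (Fin g → Fin n → B)).card ≤
      n.choose k * b ^ k * ((b ^ k - 1) ^ g * b ^ (g * (n - k))) := by
    calc (Finset.univ : Finset (Fin g → Fin n → B)).card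
        ≤ (s.biUnion (fun σ => Finset.univ.biUnion
            (fun v : {x // x ∈ σ} → B => Bad σ v))).card := Finset.card_le_card hcover
      _ ≤ ∑ σ ∈ s, (Finset.univ.biUnion (fun v : {x // x ∈ σ} → B => Bad σ v)).card :=
          Finset.card_biUnion_le
      _ ≤ ∑ σ ∈ s, ∑ v : {x // x ∈ σ} → B, (Bad σ v).card :=
          Finset.sum_le_sum fun σ _ => Finset.card_biUnion_le
      _ = ∑ σ ∈ s, b ^ k * ((b ^ k - 1) ^ g * b ^ (g * (n - k))) := by
          refine Finset.sum_congr rfl fun σ hσ => ?_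
          have hσk : σ.card = k := (Finset.mem_powersetCard.mp hσ).2
          rw [Finset.sum_congr rfl fun v _ => hBadcard σ hσk v, Finset.sum_const,
            Finset.card_univ, Fintype.card_fun, Fintype.card_coe, hσk, hb, smul_eq_mul]
      _ = n.choose k * b ^ k * ((b ^ k - 1) ^ g * b ^ (g * (n - k))) := by
          rw [Finset.sum_const, smul_eq_mul, hsdef, Finset.card_powersetCard,
            Finset.card_univ, Fintype.card_fin, mul_assoc]
  have htotal : (Finset.univ : Finset (Fin g → Fin n → B)).card = b ^ (g * n) := by
    rw [Finset.card_univ, Fintype.card_fun, Fintype.card_fun, hb, Fintype.card_fin,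
      Fintype.card_fin, ← pow_mul, Nat.mul_comm]
  rw [htotal, ← mul_assoc] at hle
  exact absurd h (not_lt.mpr hle)
end

section
/- Let B be a finite set with |B| = b ≥ 2 and let n ≥ k ≥ 2 be natural numbers. Set u = b^k/(b^k − 1). Then for g = ⌈k·log_u(n) + log_u(b^k/k!)⌉ there exists a subset G ⊆ (Fin n → B) with |G| ≤ g such that for every k-element subset σ ⊆ Fin n, the projection map G → (σ → B) (restricting each function to σ) is surjective. -/
theorem stmt10 {B : Type*} [Fintype B] (b : ℕ) (hb : Fintype.card B = b)
    (hb2 : 2 ≤ b) (n k : ℕ) (hk : 2 ≤ k) (hkn : k ≤ n)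
    (u : ℝ) (hu : u = (b : ℝ) ^ k / ((b : ℝ) ^ k - 1)) :
    ∃ G : Finset (Fin n → B),
      (G.card : ℤ) ≤
        ⌈(k : ℝ) * Real.logb u n + Real.logb u ((b : ℝ) ^ k / (k.factorial : ℝ))⌉ ∧
      ∀ σ : Finset (Fin n), σ.card = k → ∀ v : {x // x ∈ σ} → B,
        ∃ f ∈ G, ∀ x : {x // x ∈ σ}, f x.val = v x := by
  classical
  set x : ℝ := (k : ℝ) * Real.logb u n + Real.logb u ((b : ℝ) ^ k / (k.factorial : ℝ)) with hxdef
  set g0 : ℕ := (⌈x⌉).toNat with hg0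
  have hb1 : (1:ℝ) < (b:ℝ) := by exact_mod_cast hb2.trans_lt' one_lt_two
  have hk0 : k ≠ 0 := by omega
  have hBk : (1:ℝ) < (b:ℝ)^k := one_lt_pow₀ hb1 hk0
  have hBk0 : (0:ℝ) < (b:ℝ)^k := by positivity
  have hu1 : 1 < u := by rw [hu, lt_div_iff₀ (by linarith)]; linarith
  have hu0 : 0 < u := lt_trans one_pos hu1
  have hn2 : (2:ℝ) ≤ (n:ℝ) := by exact_mod_cast hk.trans hkn
  have hn0 : (0:ℝ) < (n:ℝ) := by linarith
  have hkf : (0:ℝ) < (k.factorial : ℝ) := by exact_mod_cast k.factorial_pos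
  set X : ℝ := (n:ℝ)^k * ((b:ℝ)^k / (k.factorial : ℝ)) with hXdef
  have hX0 : 0 < X := by positivity
  have hX1 : 1 < X := by
    have h1 : (k.factorial : ℝ) ≤ (n:ℝ)^k := by
      have : k.factorial ≤ n ^ k := le_trans (Nat.factorial_le_pow k) (Nat.pow_le_pow_left hkn k)
      exact_mod_cast this
    have h2 : (1:ℝ) ≤ (n:ℝ)^k / k.factorial := (one_le_div hkf).2 h1
    calc (1:ℝ) < (b:ℝ)^k := hBk
      _ = 1 * (b:ℝ)^k := (one_mul _).symm
      _ ≤ ((n:ℝ)^k / k.factorial) * (b:ℝ)^k := mul_le_mul_of_nonneg_right h2 (le_of_lt hBk0)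
      _ = X := by rw [hXdef]; ring
  have hxX : x = Real.logb u X := by
    rw [hxdef, hXdef, Real.logb_mul (by positivity) (by positivity), Real.logb_pow]
  have hxpos : 0 < x := by rw [hxX]; exact Real.logb_pos hu1 hX1
  have hceil : (0:ℤ) < ⌈x⌉ := Int.ceil_pos.2 hxpos
  have hg0z : (g0 : ℤ) = ⌈x⌉ := Int.toNat_of_nonneg (le_of_lt hceil)
  have hg0x : x ≤ (g0:ℝ) := by
    have h1 := Int.le_ceil x
    have h2 : ((⌈x⌉:ℤ):ℝ) = (g0:ℝ) := by exact_mod_cast hg0z.symm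
    linarith
  have huX : X ≤ u ^ g0 := by
    have h1 : u ^ x ≤ u ^ ((g0:ℝ) : ℝ) := Real.rpow_le_rpow_of_exponent_le (le_of_lt hu1) hg0x
    rw [Real.rpow_natCast, hxX, Real.rpow_logb hu0 (ne_of_gt hu1) hX0] at h1
    exact h1
  -- descFactorial strict bound
  have hdesc : n.descFactorial k < n ^ k := by
    obtain ⟨m, rfl⟩ : ∃ m, k = m + 1 := ⟨k - 1, by omega⟩
    have hnpos : 0 < n := by omega
    have hpm : 0 < n ^ m := pow_pos hnpos m
    calc n.descFactorial (m+1) = (n - m) * n.descFactorial m := Nat.descFactorial_succ n m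
      _ ≤ (n - 1) * n ^ m := Nat.mul_le_mul (by omega) (Nat.descFactorial_le_pow n m)
      _ < n * n ^ m := Nat.mul_lt_mul_of_pos_right (by omega) hpm
      _ = n ^ (m+1) := by ring
  have hCnk : (n.choose k : ℝ) * (k.factorial:ℝ) < (n:ℝ)^k := by
    have h : k.factorial * n.choose k < n ^ k := by
      rw [← Nat.descFactorial_eq_factorial_mul_choose]; exact hdesc
    have := (Nat.cast_lt (α := ℝ)).2 h
    push_cast at this
    linarith
  have hCX : (n.choose k : ℝ) * (b:ℝ)^k < X := by
    have hC : (n.choose k:ℝ) < (n:ℝ)^k / k.factorial := (lt_div_iff₀ hkf).2 hCnk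
    calc (n.choose k:ℝ) * (b:ℝ)^k < ((n:ℝ)^k / k.factorial) * (b:ℝ)^k :=
          mul_lt_mul_of_pos_right hC hBk0
      _ = X := by rw [hXdef]; ring
  have hCbk : (n.choose k:ℝ) * (b:ℝ)^k < u ^ g0 := lt_of_lt_of_le hCX huX
  have hble : b ^ (n - k) ≤ b ^ n := Nat.pow_le_pow_right (by omega) (by omega)
  have hMcast : ((b ^ n - b ^ (n-k) : ℕ) : ℝ) = (b:ℝ)^n - (b:ℝ)^(n-k) := by
    rw [Nat.cast_sub hble]; push_cast; ring
  have hbkmul : (b:ℝ)^(n-k) * (b:ℝ)^k = (b:ℝ)^n := by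
    rw [← pow_add]; congr 1; omega
  have hsplit : (b:ℝ)^n - (b:ℝ)^(n-k) = (b:ℝ)^n / u := by
    rw [hu, ← hbkmul]; field_simp
  have hkey : (n.choose k : ℝ) * (b:ℝ)^k * ((b:ℝ)^n - (b:ℝ)^(n-k))^g0 < ((b:ℝ)^n)^g0 := by
    have hu0g : (0:ℝ) < u ^ g0 := pow_pos hu0 g0
    have hbn0 : (0:ℝ) < ((b:ℝ)^n)^g0 := by positivity
    rw [hsplit, div_pow, ← mul_div_assoc, div_lt_iff₀ hu0g]
    calc (n.choose k : ℝ) * (b:ℝ)^k * ((b:ℝ)^n)^g0 < u ^ g0 * ((b:ℝ)^n)^g0 :=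
          mul_lt_mul_of_pos_right hCbk hbn0
      _ = ((b:ℝ)^n)^g0 * u^g0 := by ring
  have hnat : n.choose k * b^k * (b^n - b^(n-k))^g0 < (b^n)^g0 := by
    have h := hkey
    rw [← hMcast] at h
    exact_mod_cast h
  have hcardF : Fintype.card (Fin n → B) = b ^ n := by
    rw [Fintype.card_fun, hb, Fintype.card_fin]
  have hGood : ∀ (σ : Finset (Fin n)), σ.card = k → ∀ v : {x // x ∈ σ} → B,
      (Finset.univ.filter fun f : Fin n → B => ∀ x : {x // x ∈ σ}, f x.1 = v x).card
        = b ^ (n - k) := by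
    intro σ hσ v
    rw [← Fintype.card_subtype]
    have e : {f : Fin n → B // ∀ x : {x // x ∈ σ}, f x.1 = v x} ≃ ({x // x ∈ σᶜ} → B) :=
      { toFun := fun f x => f.1 x.1
        invFun := fun h => ⟨fun j => if hj : j ∈ σ then v ⟨j, hj⟩
            else h ⟨j, Finset.mem_compl.2 hj⟩, fun x => dif_pos x.2⟩
        left_inv := by
          intro f
          apply Subtype.ext
          funext j
          by_cases hj : j ∈ σ
          · simp only [dif_pos hj]
            exact (f.2 ⟨j, hj⟩).symm
          · simp only [dif_neg hj]
        right_inv := by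
          intro h
          funext z
          have hz : ¬ z.1 ∈ σ := Finset.mem_compl.1 z.2
          simp only [dif_neg hz] }
    rw [Fintype.card_congr e, Fintype.card_fun, Fintype.card_coe, Finset.card_compl,
        Fintype.card_fin, hσ, hb]
  have hMiss : ∀ (σ : Finset (Fin n)), σ.card = k → ∀ v : {x // x ∈ σ} → B,
      (Finset.univ.filter fun f : Fin n → B => ¬ ∀ x : {x // x ∈ σ}, f x.1 = v x).card
        = b ^ n - b ^ (n-k) := by
    intro σ hσ v
    have h1 := Finset.card_filter_add_card_filter_not
      (s := (Finset.univ : Finset (Fin n → B)))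
      (p := fun f => ∀ x : {x // x ∈ σ}, f x.1 = v x)
    rw [Finset.card_univ, hcardF, hGood σ hσ v] at h1
    exact Nat.eq_sub_of_add_eq' h1
  have hexists : ∃ t : Fin g0 → (Fin n → B),
      ∀ σ : Finset (Fin n), σ.card = k → ∀ v : {x // x ∈ σ} → B,
        ∃ i, ∀ y : {x // x ∈ σ}, t i y.1 = v y := by
    by_contra hcon
    push_neg at hcon
    set Bad : (Σ σ : {s : Finset (Fin n) // s.card = k}, ({x // x ∈ σ.1} → B)) →
        Finset (Fin g0 → (Fin n → B)) := fun i =>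
      Fintype.piFinset fun _ =>
        Finset.univ.filter fun f : Fin n → B => ¬ ∀ x : {x // x ∈ i.1.1}, f x.1 = i.2 x
      with hBad
    have hsub : (Finset.univ : Finset (Fin g0 → (Fin n → B))) ⊆ Finset.univ.biUnion Bad := by
      intro t _
      obtain ⟨σ, hσ, v, hv⟩ := hcon t
      refine Finset.mem_biUnion.2 ⟨⟨⟨σ, hσ⟩, v⟩, Finset.mem_univ _, ?_⟩
      rw [hBad, Fintype.mem_piFinset]
      intro i
      simp only [Finset.mem_filter, Finset.mem_univ, true_and]
      intro hall
      obtain ⟨y, hy⟩ := hv i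
      exact hy (hall y)
    have hcardBad : ∀ i, (Bad i).card = (b^n - b^(n-k))^g0 := by
      intro i
      rw [hBad, Fintype.card_piFinset, Finset.prod_const, hMiss i.1.1 i.1.2 i.2,
        Finset.card_univ, Fintype.card_fin]
    have hcardI : Fintype.card
        (Σ σ : {s : Finset (Fin n) // s.card = k}, ({x // x ∈ σ.1} → B))
          = n.choose k * b ^ k := by
      rw [Fintype.card_sigma]
      have h1 : ∀ σ : {s : Finset (Fin n) // s.card = k},
          Fintype.card ({x // x ∈ σ.1} → B) = b ^ k := by
        intro σ
        rw [Fintype.card_fun, hb, Fintype.card_coe, σ.2]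
      rw [Finset.sum_congr rfl (fun σ _ => h1 σ), Finset.sum_const, Finset.card_univ,
        Fintype.card_finset_len, Fintype.card_fin, smul_eq_mul]
    have hle : (b^n)^g0 ≤ n.choose k * b^k * (b^n - b^(n-k))^g0 := by
      calc (b^n)^g0 = Fintype.card (Fin g0 → (Fin n → B)) := by
            rw [Fintype.card_fun, hcardF, Fintype.card_fin]
        _ = (Finset.univ : Finset (Fin g0 → (Fin n → B))).card := Finset.card_univ.symm
        _ ≤ (Finset.univ.biUnion Bad).card := Finset.card_le_card hsub
        _ ≤ ∑ i, (Bad i).card := Finset.card_biUnion_le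
        _ = ∑ _i : (Σ σ : {s : Finset (Fin n) // s.card = k}, ({x // x ∈ σ.1} → B)),
              (b^n - b^(n-k))^g0 := Finset.sum_congr rfl (fun i _ => hcardBad i)
        _ = Fintype.card (Σ σ : {s : Finset (Fin n) // s.card = k}, ({x // x ∈ σ.1} → B))
              * (b^n - b^(n-k))^g0 := by
            rw [Finset.sum_const, Finset.card_univ, smul_eq_mul]
        _ = n.choose k * b^k * (b^n - b^(n-k))^g0 := by rw [hcardI]
    exact absurd hnat (not_lt.2 hle)
  obtain ⟨t, ht⟩ := hexists
  refine ⟨Finset.image t Finset.univ, ?_, ?_⟩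
  · calc ((Finset.image t Finset.univ).card : ℤ)
        ≤ ((Finset.univ : Finset (Fin g0)).card : ℤ) := by exact_mod_cast Finset.card_image_le
      _ = (g0 : ℤ) := by rw [Finset.card_univ, Fintype.card_fin]
      _ = ⌈x⌉ := hg0z
  · intro σ hσ v
    obtain ⟨i, hi⟩ := ht σ hσ v
    exact ⟨t i, Finset.mem_image_of_mem t (Finset.mem_univ i), hi⟩
end

section
/- Let n ≥ 2 and let A₁, …, Aₙ be sets. Suppose R ⊆ Π Aᵢ is a subdirect relation (each coordinate projection of R is surjective) satisfying the parallelogram property: for every partition of Fin n into nonempty sets S, T, if the tuples a⌢u, a⌢v, b⌢v all lie in R (where a, b ∈ A^S and u, v ∈ A^T, and x⌢y denotes the tuple agreeing with x on S and y on T), then b⌢u ∈ R. For each i define θᵢ ⊆ Aᵢ × Aᵢ by (a, b) ∈ θᵢ iff there exists c ∈ Π_{j≠i} Aⱼ with both the tuple extending c by a at i and the tuple extending c by b at i in R. Then each θᵢ is an equivalence relation on Aᵢ. -/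
/-- The parallelogram property for a relation `R ⊆ Π i, A i`: for every
partition of `Fin n` into two nonempty cells `S` and `Sᶜ`, if
`a⌢u, a⌢v, b⌢v ∈ R` then `b⌢u ∈ R`. -/
def Parallelogram {n : ℕ} {A : Fin n → Type*} (R : Set (∀ i, A i)) : Prop :=
  ∀ S : Set (Fin n), S.Nonempty → Sᶜ.Nonempty →
    ∀ p q r s : ∀ i, A i, p ∈ R → q ∈ R → r ∈ R →
      (∀ i ∈ S, p i = q i) → (∀ i ∈ S, r i = s i) →
      (∀ i ∉ S, q i = r i) → (∀ i ∉ S, p i = s i) → s ∈ R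

/-- The coordinate kernel of `R` at coordinate `i`. -/
def CoordKernel {n : ℕ} {A : Fin n → Type*} (R : Set (∀ i, A i)) (i : Fin n)
    (a b : A i) : Prop :=
  ∃ p q : ∀ j, A j, p ∈ R ∧ q ∈ R ∧ p i = a ∧ q i = b ∧ ∀ j ≠ i, p j = q j


section

variable {n : ℕ} {A : Fin n → Type*} {R : Set (∀ i, A i)} {i : Fin n}

/-- The parallelogram property for the cut `{i}ᶜ | {i}`; when `i` is the only coordinate,
the updated tuple is `p` itself. -/
theorem Parallelogram.update_mem (hpar : Parallelogram R) {p q r : ∀ j, A j}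
    (hp : p ∈ R) (hq : q ∈ R) (hr : r ∈ R) (hpq : ∀ j ≠ i, p j = q j) (hqr : q i = r i) :
    Function.update r i (p i) ∈ R := by
  by_cases hne : ∃ j, j ≠ i
  · obtain ⟨j, hji⟩ := hne
    refine hpar {i}ᶜ ⟨j, hji⟩ ⟨i, by simp⟩ p q r _ hp hq hr hpq
      (fun k hk => (Function.update_of_ne hk _ _).symm) ?_ ?_
    all_goals
      intro k hk
      obtain rfl : k = i := by simpa using hk
      simp [hqr]
  · push Not at hne
    convert hp using 1
    funext k
    obtain rfl := hne k
    exact Function.update_self ..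

theorem CoordKernel.refl_of_surjective (hsd : ∀ a : A i, ∃ r ∈ R, r i = a) (a : A i) :
    CoordKernel R i a a := by
  obtain ⟨r, hr, rfl⟩ := hsd a
  exact ⟨r, r, hr, hr, rfl, rfl, fun _ _ => rfl⟩

theorem CoordKernel.symm {a b : A i} : CoordKernel R i a b → CoordKernel R i b a := by
  rintro ⟨p, q, hp, hq, hpa, hqb, hpq⟩
  exact ⟨q, p, hq, hp, hqb, hpa, fun j hj => (hpq j hj).symm⟩

theorem CoordKernel.trans_of_parallelogram (hpar : Parallelogram R) {a b c : A i} :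
    CoordKernel R i a b → CoordKernel R i b c → CoordKernel R i a c := by
  rintro ⟨p, q, hp, hq, rfl, rfl, hpq⟩ ⟨p', q', hp', hq', hqp', rfl, hpq'⟩
  refine ⟨Function.update p' i (p i), q', hpar.update_mem hp hq hp' hpq hqp'.symm, hq',
    Function.update_self .., rfl, fun j hj => ?_⟩
  rw [Function.update_of_ne hj, hpq' j hj]

end

theorem stmt11_general {n : ℕ} {A : Fin n → Type*} (R : Set (∀ i, A i))
    (hsd : ∀ i : Fin n, ∀ a : A i, ∃ r ∈ R, r i = a)
    (hpar : Parallelogram R) (i : Fin n) :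
    Equivalence (CoordKernel R i) :=
  ⟨CoordKernel.refl_of_surjective (hsd i), CoordKernel.symm,
    CoordKernel.trans_of_parallelogram hpar⟩

theorem stmt11 {n : ℕ} (hn : 2 ≤ n) {A : Fin n → Type*} (R : Set (∀ i, A i))
    (hsd : ∀ i : Fin n, ∀ a : A i, ∃ r ∈ R, r i = a)
    (hpar : Parallelogram R) (i : Fin n) :
    Equivalence (CoordKernel R i) :=
  stmt11_general R hsd hpar i
end

section
/- With the setup of the coordinate kernels: let n ≥ 2, R ⊆ Π Aᵢ subdirect with the parallelogram property, and θᵢ the coordinate kernel at i. Then R is saturated with respect to the θᵢ: if r ∈ R and s ∈ Π Aᵢ satisfy (rᵢ, sᵢ) ∈ θᵢ for every i, then s ∈ R. Equivalently, R equals the preimage of its image under the product quotient map ψ : Π Aᵢ → Π (Aᵢ/θᵢ). -/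
/-!
If `t ∈ R` and `(t i, b) ∈ θᵢ` is witnessed by `p, q ∈ R` agreeing off `i`, then the parallelogram
property for the partition `{{i}ᶜ, {i}}` applied to `q, p, t` puts `t` with `i`-th coordinate
changed to `b` into `R`. Changing the coordinates of `r` into those of `s` one at a time then
stays inside `R`.
-/

namespace Parallelogram

variable {n : ℕ} {A : Fin n → Type*} {R : Set (∀ i, A i)}

theorem update_mem_s12 (hpar : Parallelogram R) {t : ∀ i, A i} (ht : t ∈ R) {i : Fin n}
    {b : A i} (hθ : CoordKernel R i (t i) b) : Function.update t i b ∈ R := by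
  obtain ⟨p, q, hp, hq, hpi, rfl, hoff⟩ := hθ
  by_cases hi : ∃ j, j ≠ i
  · have mem_compl : ∀ k, k ∉ ({i}ᶜ : Set (Fin n)) → k = i := by simp
    refine hpar {i}ᶜ hi ⟨i, by simp⟩ q p t _ hq hp ht (fun k hk => (hoff k hk).symm)
      (fun k hk => (Function.update_of_ne hk _ _).symm) ?_ ?_
    · intro k hk
      rwa [mem_compl k hk]
    · intro k hk
      rw [mem_compl k hk, Function.update_self]
  · -- with a single coordinate, `update t i (q i)` is `q` itself
    push Not at hi
    convert hq
    funext k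
    obtain rfl := hi k
    exact Function.update_self ..

theorem piecewise_mem (hpar : Parallelogram R) {r s : ∀ i, A i} (hr : r ∈ R)
    (hθ : ∀ i, CoordKernel R i (r i) (s i)) (S : Finset (Fin n)) : S.piecewise s r ∈ R := by
  induction S using Finset.induction_on with
  | empty => simpa using hr
  | insert i S hi ih =>
    rw [Finset.piecewise_insert]
    exact hpar.update_mem_s12 ih (by rw [Finset.piecewise_eq_of_notMem _ _ _ hi]; exact hθ i)

end Parallelogram

theorem stmt12_general {n : ℕ} {A : Fin n → Type*} (R : Set (∀ i, A i))
    (hpar : Parallelogram R) (r s : ∀ i, A i) (hr : r ∈ R)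
    (hθ : ∀ i : Fin n, CoordKernel R i (r i) (s i)) : s ∈ R := by
  simpa using hpar.piecewise_mem hr hθ Finset.univ

theorem stmt12 {n : ℕ} (hn : 2 ≤ n) {A : Fin n → Type*} (R : Set (∀ i, A i))
    (hsd : ∀ i : Fin n, ∀ a : A i, ∃ r ∈ R, r i = a)
    (hpar : Parallelogram R) (r s : ∀ i, A i) (hr : r ∈ R)
    (hθ : ∀ i : Fin n, CoordKernel R i (r i) (s i)) : s ∈ R :=
  stmt12_general R hpar r s hr hθ
end
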